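/- Let f : {(x,y) ∈ ℤ² : x < y} → ℝ be finitely supported, and define (Ŝf)(x,y) = ½ [f(x,y+1) + f(x−1,y) − 2 f(x,y)] + ½·1_{y−x>1} [f(x,y−1) + f(x+1,y) − 2 f(x,y)]. Then for every x ∈ ℕ, the reduced function satisfies (Ŝf)‾(x) = f̄(x+1) − f̄(x) + 1_{x>0} (f̄(x−1) − f̄(x)); that is, (Ŝf)‾ = 𝒮 f̄. -/

import Mathlib

/-!
On the diagonal `y - x = d` the indicator `1_{y-x>1}` is the constant `1_{d>1}`, so there `Ŝf` is a
combination of the values of `f` on the diagonals `d - 1`, `d`, `d + 1` at translated points. For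
finitely supported `f` the sum along a diagonal is linear and translation invariant, so the diagonal
sums of `Ŝf` are second differences of the diagonal sums of `f`; and `f̄(x)` is the diagonal sum at
`d = x + 1`.
-/

/-- The generator of the symmetric nearest-neighbor random walk on `ℕ` reflected at `0`. -/
noncomputable def walkGen (g : ℕ → ℝ) : ℕ → ℝ :=
  fun x => if x = 0 then g 1 - g 0 else g (x + 1) + g (x - 1) - 2 * g x

/-- The action `Ŝ` of the symmetric simple exclusion generator on degree-two
coefficient functions `f(x,y)`, `x < y`:
`(Ŝf)(x,y) = ½[f(x,y+1) + f(x-1,y) - 2f(x,y)] + ½·1_{y-x>1}[f(x,y-1) + f(x+1,y) - 2f(x,y)]`. -/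
noncomputable def Shat (f : ℤ → ℤ → ℝ) : ℤ → ℤ → ℝ :=
  fun x y =>
    (f x (y + 1) + f (x - 1) y - 2 * f x y) / 2 +
      if 1 < y - x then (f x (y - 1) + f (x + 1) y - 2 * f x y) / 2 else 0

/-- The reduced function `f̄(x) = ∑_y f(y, y + x + 1)`. -/
noncomputable def reduced (f : ℤ → ℤ → ℝ) : ℕ → ℝ :=
  fun x => ∑ᶠ y : ℤ, f y (y + (x : ℤ) + 1)

open Function

section SecondDifference

variable {α : Type*} {g₁ g₂ g₃ : α → ℝ}

lemma hasFiniteSupport_add_sub_two_mul_div_two (h₁ : HasFiniteSupport g₁)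
    (h₂ : HasFiniteSupport g₂) (h₃ : HasFiniteSupport g₃) :
    HasFiniteSupport fun a => (g₁ a + g₂ a - 2 * g₃ a) / 2 := by
  simpa only [div_eq_mul_inv] using
    ((h₁.fun_add h₂).fun_sub (h₃.fun_mul_right fun _ => 2)).fun_mul_left fun _ => 2⁻¹

lemma finsum_add_sub_two_mul_div_two (h₁ : HasFiniteSupport g₁)
    (h₂ : HasFiniteSupport g₂) (h₃ : HasFiniteSupport g₃) :
    ∑ᶠ a, (g₁ a + g₂ a - 2 * g₃ a) / 2 = ((∑ᶠ a, g₁ a) + (∑ᶠ a, g₂ a) - 2 * ∑ᶠ a, g₃ a) / 2 := by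
  simp only [div_eq_mul_inv, ← finsum_mul]
  rw [finsum_sub_distrib (h₁.fun_add h₂) (h₃.fun_mul_right _), finsum_add_distrib h₁ h₂,
    ← mul_finsum]

end SecondDifference

lemma hasFiniteSupport_apply_of_injective {α β γ M : Type*} [Zero M] {f : α → β → M}
    (hf : (support fun p : α × β => f p.1 p.2).Finite) {u : γ → α} (hu : Injective u)
    (v : γ → β) :
    HasFiniteSupport fun c => f (u c) (v c) :=
  HasFiniteSupport.comp_of_injective (f := fun p : α × β => f p.1 p.2) (g := fun c => (u c, v c))
    (fun _ _ h => hu (congrArg Prod.fst h)) hf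

noncomputable def diagSum (f : ℤ → ℤ → ℝ) (d : ℤ) : ℝ := ∑ᶠ y, f y (y + d)

lemma diagSum_eq_finsum_add (f : ℤ → ℤ → ℝ) (a d : ℤ) :
    diagSum f d = ∑ᶠ y, f (y + a) (y + a + d) := by
  rw [diagSum, ← finsum_comp_equiv (Equiv.addRight a)]
  rfl

lemma reduced_eq_diagSum (f : ℤ → ℤ → ℝ) (n : ℕ) : reduced f n = diagSum f (n + 1) :=
  finsum_congr fun y => by rw [add_assoc]

lemma diagSum_Shat {f : ℤ → ℤ → ℝ} (hfin : (support fun p : ℤ × ℤ => f p.1 p.2).Finite) (d : ℤ) :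
    diagSum (Shat f) d =
      diagSum f (d + 1) - diagSum f d + if 1 < d then diagSum f (d - 1) - diagSum f d else 0 := by
  have fin_up : HasFiniteSupport fun y => f y (y + d + 1) :=
    hasFiniteSupport_apply_of_injective hfin injective_id _
  have fin_left : HasFiniteSupport fun y => f (y - 1) (y + d) :=
    hasFiniteSupport_apply_of_injective hfin sub_left_injective _
  have fin_diag : HasFiniteSupport fun y => f y (y + d) :=
    hasFiniteSupport_apply_of_injective hfin injective_id _
  have fin_down : HasFiniteSupport fun y => f y (y + d - 1) :=
    hasFiniteSupport_apply_of_injective hfin injective_id _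
  have fin_right : HasFiniteSupport fun y => f (y + 1) (y + d) :=
    hasFiniteSupport_apply_of_injective hfin (add_left_injective 1) _
  have sum_up : ∑ᶠ y, f y (y + d + 1) = diagSum f (d + 1) :=
    finsum_congr fun y => by rw [add_assoc]
  have sum_left : ∑ᶠ y, f (y - 1) (y + d) = diagSum f (d + 1) :=
    ((diagSum_eq_finsum_add f (-1) (d + 1)).trans (finsum_congr fun y => by ring_nf)).symm
  have sum_down : ∑ᶠ y, f y (y + d - 1) = diagSum f (d - 1) :=
    finsum_congr fun y => by rw [add_sub_assoc]
  have sum_right : ∑ᶠ y, f (y + 1) (y + d) = diagSum f (d - 1) :=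
    ((diagSum_eq_finsum_add f 1 (d - 1)).trans (finsum_congr fun y => by ring_nf)).symm
  have sum_diag : ∑ᶠ y, f y (y + d) = diagSum f d := rfl
  have outer : ∑ᶠ y, (f y (y + d + 1) + f (y - 1) (y + d) - 2 * f y (y + d)) / 2 =
      diagSum f (d + 1) - diagSum f d := by
    rw [finsum_add_sub_two_mul_div_two fin_up fin_left fin_diag, sum_up, sum_left, sum_diag]
    ring
  have inner : ∑ᶠ y, (f y (y + d - 1) + f (y + 1) (y + d) - 2 * f y (y + d)) / 2 =
      diagSum f (d - 1) - diagSum f d := by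
    rw [finsum_add_sub_two_mul_div_two fin_down fin_right fin_diag, sum_down, sum_right, sum_diag]
    ring
  show ∑ᶠ y, Shat f y (y + d) = _
  simp only [Shat, add_sub_cancel_left]
  split_ifs
  · rw [finsum_add_distrib (hasFiniteSupport_add_sub_two_mul_div_two fin_up fin_left fin_diag)
      (hasFiniteSupport_add_sub_two_mul_div_two fin_down fin_right fin_diag), outer, inner]
  · simpa only [add_zero] using outer

theorem reduced_Shat_general (f : ℤ → ℤ → ℝ)
    (hfin : (Function.support fun p : ℤ × ℤ => f p.1 p.2).Finite) :
    ∀ x : ℕ, reduced (Shat f) x = walkGen (reduced f) x := by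
  intro x
  rw [reduced_eq_diagSum, diagSum_Shat hfin]
  rcases x with _ | n
  · simp [walkGen, reduced_eq_diagSum]
  · rw [walkGen, if_neg n.succ_ne_zero, if_pos (by omega), Nat.add_sub_cancel]
    simp only [reduced_eq_diagSum, Nat.cast_add, Nat.cast_one, add_sub_cancel_right]
    ring

/-- For a finitely supported `f` on `{(x,y) : x < y}`, the reduction of `Ŝf` equals
`𝒮` applied to the reduction of `f`: `(Ŝf)‾ = 𝒮 f̄`. -/
theorem reduced_Shat (f : ℤ → ℤ → ℝ)
    (hfin : (Function.support fun p : ℤ × ℤ => f p.1 p.2).Finite)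
    (hdom : ∀ x y : ℤ, y ≤ x → f x y = 0) :
    ∀ x : ℕ, reduced (Shat f) x = walkGen (reduced f) x :=
  reduced_Shat_general f hfin
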